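/- arXiv:1610.00905 — 3 statements merged into one kernel-verified Lean document; each statement's English description precedes it below -/
import Mathlib

section
/- For a monoidal category V and an adjunction f ⊣ f* : B → A in a bicategory B (realized, e.g., for functor categories), if the unit η : 1_A → f* ∘ f is a monomorphism in the hom-category [A,A], then the map sending an automorphism s of 1_A to the automorphism l_{f*} ∘ (s ◦ f*) ∘ l_{f*}^{-1} of f* is an injective group homomorphism from Aut(1_A) to Aut(f*). -/
open CategoryTheory CategoryTheory.Bicategory

/-- The map sending an automorphism `s` of the identity 1-cell `𝟙 a` to the
automorphism `(ρ_ fs)⁻¹ ≫ (fs ◁ s) ≫ (ρ_ fs)` of `fs`. -/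
def autWhisker {B : Type*} [Bicategory B] {a b : B} (fs : b ⟶ a) :
    Aut (𝟙 a) → Aut fs :=
  fun s => (ρ_ fs).symm ≪≫ whiskerLeftIso fs s ≪≫ ρ_ fs

/-- Given an adjunction `f ⊣ fs` in a bicategory whose unit `η : 𝟙 a ⟶ f ≫ fs`
is a monomorphism in the hom-category `[a,a]`, the map sending an automorphism
`s` of the identity 1-cell `𝟙 a` to the automorphism of `fs` obtained by
whiskering with `fs` and conjugating by the unitor is an injective group
homomorphism `Aut (𝟙 a) → Aut fs`. -/
theorem aut_id_to_aut_rightAdjoint_injective_monoidHom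
    {B : Type*} [Bicategory B] {a b : B} {f : a ⟶ b} {fs : b ⟶ a}
    (adj : Bicategory.Adjunction f fs) (hmono : Mono adj.unit) :
    Function.Injective (autWhisker fs) ∧
    ∀ s t : Aut (𝟙 a), autWhisker fs (s * t) = autWhisker fs s * autWhisker fs t := by
  constructor
  · intro s t h
    -- extract equality of whiskered homs
    have h1 : fs ◁ s.hom = fs ◁ t.hom := by
      have := congrArg Iso.hom h
      simp only [autWhisker, Iso.trans_hom, Iso.symm_hom, whiskerLeftIso_hom] at this
      have := congrArg (fun x => (ρ_ fs).hom ≫ x ≫ (ρ_ fs).inv) this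
      simp at this
      exact this
    have h2 : (f ≫ fs) ◁ s.hom = (f ≫ fs) ◁ t.hom := by
      rw [comp_whiskerLeft, comp_whiskerLeft, h1]
    have h3 : (𝟙 a) ◁ s.hom ≫ adj.unit ▷ (𝟙 a) = (𝟙 a) ◁ t.hom ≫ adj.unit ▷ (𝟙 a) := by
      rw [whisker_exchange, whisker_exchange, h2]
    have hm : Mono (adj.unit ▷ (𝟙 a)) := by
      rw [Bicategory.whiskerRight_id]
      exact mono_comp _ _
    have h4 : (𝟙 a) ◁ s.hom = (𝟙 a) ◁ t.hom := by
      exact (cancel_mono _).mp h3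
    have h5 : s.hom = t.hom := by
      have := congrArg (fun x => (λ_ (𝟙 a)).inv ≫ x ≫ (λ_ (𝟙 a)).hom) h4
      simpa [id_whiskerLeft] using this
    exact Aut.ext h5
  · intro s t
    ext
    simp [autWhisker, Aut.Aut_mul_def]
    exact (by simp [whiskerLeftIso] :
      (ρ_ fs).inv ≫ fs ◁ (t.hom ≫ s.hom) ≫ (ρ_ fs).hom =
        ((ρ_ fs).inv ≫ fs ◁ t.hom ≫ (ρ_ fs).hom) ≫ (ρ_ fs).inv ≫ fs ◁ s.hom ≫ (ρ_ fs).hom)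
end

section
/- Let (η, ε) : f ⊣ f* : B → A be an adjunction in a bicategory with η monomorphic in [A,A], and let h : A → A be an invertible 1-cell. If there is an isomorphism σ : f ∘ h → f in [A,B], then the 2-cell i_h := (f* ◦ σ) · (η ◦ h) : h → f* ∘ f is a monomorphism, and the composite (f* ∘ f) ∘ h → f* ∘ f induced by multiplication of the ring S_f = f* ∘ f is an isomorphism. -/
/-!
Whiskering by the invertible 1-cell `h` is an equivalence of hom-categories, so it preserves
the mono `η`; hence `i_h`, which is `h ◁ η` up to invertible 2-cells, is mono. By the triangle
identity the adjoint transpose of `i_h` is `σ`, so `ξ^l_{i_h}` is an associator followed by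
`σ ▷ f*`, an isomorphism.
-/

open CategoryTheory CategoryTheory.Bicategory

section

variable {B : Type*} [Bicategory B] {a b : B}

/-- The 2-cell `i_h : h ⟶ h ≫ (f ≫ fs)` obtained from an isomorphism
`σ : h ≫ f ≅ f` and the unit of an adjunction `f ⊣ fs`:
`h ≅ h ≫ 𝟙 a ⟶ h ≫ (f ≫ fs) ≅ (h ≫ f) ≫ fs ⟶ f ≫ fs`
(in classical notation, `(f* ◦ σ) · (η ◦ h)`). -/
noncomputable def liftCell {f : a ⟶ b} {fs : b ⟶ a} (adj : Bicategory.Adjunction f fs)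
    (h : a ⟶ a) (σ : h ≫ f ≅ f) : h ⟶ f ≫ fs :=
  (ρ_ h).inv ≫ (h ◁ adj.unit) ≫ (α_ h f fs).inv ≫ (σ.hom ▷ fs)

/-- The 2-cell `ξ^l_{i} : h ≫ (f ≫ fs) ⟶ f ≫ fs` induced by the multiplication of
the monoid `S_f = f ≫ fs`, for a 2-cell `i : h ⟶ f ≫ fs`; namely
`(f* ◦ ξ_i) ∘ α` where `ξ_i = (ε ◦ f)·(f ◦ i)`. -/
noncomputable def xiL {f : a ⟶ b} {fs : b ⟶ a} (adj : Bicategory.Adjunction f fs)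
    (h : a ⟶ a) (i : h ⟶ f ≫ fs) : h ≫ (f ≫ fs) ⟶ f ≫ fs :=
  (α_ h f fs).inv ≫
    ((i ▷ f ≫ (α_ f fs f).hom ≫ (f ◁ adj.counit) ≫ (ρ_ f).hom) ▷ fs)

noncomputable def precompEquivalence (c : B) {h : a ⟶ b} {h' : b ⟶ a}
    (e₁ : h ≫ h' ≅ 𝟙 a) (e₂ : h' ≫ h ≅ 𝟙 b) :
    CategoryTheory.Equivalence (b ⟶ c) (a ⟶ c) :=
  .mk (precomp c h) (precomp c h')
    ((leftUnitorNatIso b c).symm ≪≫ (precomposing b b c).mapIso e₂.symm ≪≫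
      associatorNatIsoRight h' h c)
    ((associatorNatIsoRight h h' c).symm ≪≫ (precomposing a a c).mapIso e₁ ≪≫
      leftUnitorNatIso a c)

lemma mono_whiskerLeft_of_iso {c : B} {h : a ⟶ b} {h' : b ⟶ a}
    (e₁ : h ≫ h' ≅ 𝟙 a) (e₂ : h' ≫ h ≅ 𝟙 b) {x y : b ⟶ c} (η : x ⟶ y) [Mono η] :
    Mono (h ◁ η) :=
  (precompEquivalence c e₁ e₂).functor.map_mono η

lemma liftCell_whiskerRight_comp_counit {f : a ⟶ b} {fs : b ⟶ a} (adj : Adjunction f fs)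
    (h : a ⟶ a) (σ : h ≫ f ≅ f) :
    liftCell adj h σ ▷ f ≫ (α_ f fs f).hom ≫ f ◁ adj.counit ≫ (ρ_ f).hom = σ.hom :=
  calc liftCell adj h σ ▷ f ≫ (α_ f fs f).hom ≫ f ◁ adj.counit ≫ (ρ_ f).hom
      = 𝟙 _ ⊗≫ h ◁ leftZigzag adj.unit adj.counit ⊗≫ σ.hom ▷ 𝟙 b ≫ (ρ_ f).hom := by
        simp only [liftCell, leftZigzag, comp_whiskerRight, Category.assoc]
        rw [associator_naturality_left_assoc, ← whisker_exchange_assoc]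
        bicategory
    _ = σ.hom := by
        rw [adj.left_triangle, rightUnitor_naturality]
        bicategory

/-- Proposition: if `η` is a monomorphism in `[a,a]`, `h` is an invertible 1-cell
and `σ : h ≫ f ≅ f` is an isomorphism, then `i_h := (f* ◦ σ)·(η ◦ h)` is a
monomorphism and `ξ^l_{i_h}` is an isomorphism (i.e. `[(h, i_h)] ∈ 𝔗^{A,l}_f`). -/
theorem liftCell_mono_and_xiL_isIso {f : a ⟶ b} {fs : b ⟶ a}
    (adj : Bicategory.Adjunction f fs) (hmono : Mono adj.unit)
    (h h' : a ⟶ a) (e₁ : h ≫ h' ≅ 𝟙 a) (e₂ : h' ≫ h ≅ 𝟙 a)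
    (σ : h ≫ f ≅ f) :
    Mono (liftCell adj h σ) ∧ IsIso (xiL adj h (liftCell adj h σ)) := by
  refine ⟨?_, ?_⟩
  · have : Mono (h ◁ adj.unit) := mono_whiskerLeft_of_iso e₁ e₂ adj.unit
    rw [liftCell]
    infer_instance
  · rw [xiL, liftCell_whiskerRight_comp_counit]
    infer_instance

end
end

section
/- Let A be a commutative monoid object in a symmetric monoidal category V, and λ an automorphism of A as a right A-module. Form the pullback A_λ of e : I → A along λ. Then the A-coring endomorphism of A ⊗ A associated to the invertible subobject (A_λ, i_λ) equals (id_A ⊗ λ^{-1}) ∘ (λ ⊗ id_A) : A ⊗ A → A ⊗ A. -/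
open CategoryTheory MonoidalCategory Limits

/-!
Because `l` is invertible, the pullback of `e` along `l` is carried isomorphically onto `𝟙_ V`
by its first projection, and under this isomorphism `i` becomes `e ≫ l⁻¹`. The inverse `l⁻¹` is
right `A`-linear, hence also left `A`-linear as `A` is commutative, so `ξ^l` and `ξ^r` are the
right and left unitors followed by `l⁻¹`. The coring endomorphism then collapses, by the
triangle identity, to `(l ▷ A) ≫ (A ◁ l⁻¹)`.
-/

open scoped MonObj

section

variable {V : Type*} [Category V] [MonoidalCategory V] {A : V} [MonObj A]

lemma inv_whiskerRight_comp_mul (l : A ≅ A) (hl : μ ≫ l.hom = (l.hom ▷ A) ≫ μ) :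
    (l.inv ▷ A) ≫ μ = μ ≫ l.inv := by
  rw [Iso.eq_comp_inv, Category.assoc, hl, ← comp_whiskerRight_assoc, Iso.inv_hom_id,
    id_whiskerRight, Category.id_comp]

lemma whiskerLeft_comp_mul_of_isCommMonObj [BraidedCategory V] [IsCommMonObj A] (f : A ⟶ A)
    (hf : (f ▷ A) ≫ μ = μ ≫ f) : (A ◁ f) ≫ μ = μ ≫ f := by
  calc (A ◁ f) ≫ μ = (A ◁ f) ≫ (β_ A A).hom ≫ μ := by rw [IsCommMonObj.mul_comm]
    _ = (β_ A A).hom ≫ (f ▷ A) ≫ μ := BraidedCategory.braiding_naturality_right_assoc _ _ _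
    _ = μ ≫ f := by rw [hf, IsCommMonObj.mul_comm_assoc]

lemma whiskerRight_comp_unit_comp_mul {P : V} (g : P ⟶ 𝟙_ V) (f : A ⟶ A)
    (hf : (f ▷ A) ≫ μ = μ ≫ f) : ((g ≫ η ≫ f) ▷ A) ≫ μ = (g ▷ A) ≫ (λ_ A).hom ≫ f := by
  simp only [comp_whiskerRight, Category.assoc, hf, MonObj.one_mul_assoc]

lemma whiskerLeft_comp_unit_comp_mul {P : V} (g : P ⟶ 𝟙_ V) (f : A ⟶ A)
    (hf : (A ◁ f) ≫ μ = μ ≫ f) : (A ◁ (g ≫ η ≫ f)) ≫ μ = (A ◁ g) ≫ (ρ_ A).hom ≫ f := by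
  simp only [whiskerLeft_comp, Category.assoc, hf, MonObj.mul_one_assoc]

end

lemma pullback_snd_eq_fst_comp_comp_inv {C : Type*} [Category C] {X Y Z : C} (f : X ⟶ Z)
    (g : Y ≅ Z) [HasPullback f g.hom] :
    pullback.snd f g.hom = pullback.fst f g.hom ≫ f ≫ g.inv := by
  rw [← Category.assoc, Iso.eq_comp_inv, pullback.condition]

/-- Let `A` be a commutative monoid object in a symmetric monoidal category with
pullbacks, and let `l : A ≅ A` be an automorphism of `A` as a right `A`-module.
Let `i : A_l ⟶ A` be the pullback of the unit `e : 𝟙_V ⟶ A` along `l`, and let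
`ξ^l = m ∘ (A ⊗ i)` and `ξ^r = m ∘ (i ⊗ A)` be the induced maps.  Then `ξ^l` and
`ξ^r` are isomorphisms and the associated `A`-coring endomorphism
`(A ⊗ ξ^r) ∘ α ∘ ((ξ^l)⁻¹ ⊗ A)` of the Sweedler coring `A ⊗ A` equals
`(A ⊗ l⁻¹) ∘ (l ⊗ A)`. -/
theorem gamma_of_pullback_unit_along_aut
    {V : Type*} [Category V] [MonoidalCategory V] [SymmetricCategory V]
    [HasPullbacks V] (A : Mon V)
    (hcomm : (β_ A.X A.X).hom ≫ (MonObj.mul (X := A.X)) = (MonObj.mul (X := A.X)))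
    (l : A.X ≅ A.X)
    (hl : (MonObj.mul (X := A.X)) ≫ l.hom = (l.hom ▷ A.X) ≫ (MonObj.mul (X := A.X))) :
    letI P : V := pullback (MonObj.one (X := A.X)) l.hom
    letI i : P ⟶ A.X := pullback.snd (MonObj.one (X := A.X)) l.hom
    letI ξl : A.X ⊗ P ⟶ A.X := (A.X ◁ i) ≫ (MonObj.mul (X := A.X))
    letI ξr : P ⊗ A.X ⟶ A.X := (i ▷ A.X) ≫ (MonObj.mul (X := A.X))
    IsIso ξr ∧
      ∃ ξlinv : A.X ⟶ A.X ⊗ P,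
        ξl ≫ ξlinv = 𝟙 _ ∧ ξlinv ≫ ξl = 𝟙 _ ∧
          (ξlinv ▷ A.X) ≫ (α_ A.X P A.X).hom ≫ (A.X ◁ ξr) =
            (l.hom ▷ A.X) ≫ (A.X ◁ l.inv) := by
  have : IsCommMonObj A.X := ⟨hcomm⟩
  have hinv_right : (l.inv ▷ A.X) ≫ μ = μ ≫ l.inv := inv_whiskerRight_comp_mul l hl
  have hinv_left : (A.X ◁ l.inv) ≫ μ = μ ≫ l.inv :=
    whiskerLeft_comp_mul_of_isCommMonObj l.inv hinv_right
  let φ := asIso (pullback.fst η[A.X] l.hom)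
  have hi : pullback.snd η[A.X] l.hom = φ.hom ≫ η ≫ l.inv :=
    pullback_snd_eq_fst_comp_comp_inv η l
  have hξl : (A.X ◁ pullback.snd η[A.X] l.hom) ≫ μ = (A.X ◁ φ.hom) ≫ (ρ_ A.X).hom ≫ l.inv := by
    rw [hi, whiskerLeft_comp_unit_comp_mul _ _ hinv_left]
  have hξr : (pullback.snd η[A.X] l.hom ▷ A.X) ≫ μ = (φ.hom ▷ A.X) ≫ (λ_ A.X).hom ≫ l.inv := by
    rw [hi, whiskerRight_comp_unit_comp_mul _ _ hinv_right]
  rw [hξl, hξr]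
  refine ⟨inferInstance, l.hom ≫ (ρ_ A.X).inv ≫ (A.X ◁ φ.inv), by simp, by simp, ?_⟩
  simp only [comp_whiskerRight, whiskerLeft_comp, Category.assoc]
  rw [associator_naturality_middle_assoc, ← whiskerLeft_comp_assoc, ← comp_whiskerRight φ.inv,
    Iso.inv_hom_id]
  monoidal
end
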